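/- arXiv:quant-ph/0508222 — 4 statements merged into one kernel-verified Lean document; each statement's English description precedes it below -/
import Mathlib

section
/- For any complex unit vector ψ in (ℂ²)^⊗n ⊗ H (for an arbitrary finite-dimensional Hilbert space H), let Q⁺(x) be the probability of outcome x ∈ {0,1}ⁿ when measuring the first n qubits in the computational basis, and Q^×(z) the probability of outcome z when measuring them in the Hadamard basis (i.e. Q^×(z) is the squared norm of the z-component after applying H^⊗n to the first n qubits). Then for any subsets L⁺, L^× ⊆ {0,1}ⁿ: Q⁺(L⁺) + Q^×(L^×) ≤ (1 + √(2^{-n}·|L⁺|·|L^×|))². -/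
open scoped BigOperators

/-- The sign `(-1)^{x·z}` where `x·z` is the inner product mod 2 of bit strings. -/
noncomputable def hadSign {n : ℕ} (x z : Fin n → Bool) : ℂ :=
  (-1) ^ (∑ i : Fin n, (if x i && z i then 1 else 0 : ℕ))

/-- Probability of outcome `x` when measuring the first `n` qubits of
`ψ = ∑ x, α x • (|x⟩ ⊗ φ x)` in the computational basis. -/
noncomputable def Qplus {n : ℕ} (α : (Fin n → Bool) → ℂ) (x : Fin n → Bool) : ℝ :=
  ‖α x‖ ^ 2

/-- Probability of outcome `z` when measuring the first `n` qubits in the Hadamard basis. -/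
noncomputable def Qtimes {H : Type*} [NormedAddCommGroup H] [InnerProductSpace ℂ H]
    {n : ℕ} (α : (Fin n → Bool) → ℂ) (φ : (Fin n → Bool) → H) (z : Fin n → Bool) : ℝ :=
  ‖∑ x : Fin n → Bool, ((((Real.sqrt (2 ^ n))⁻¹ : ℝ) : ℂ) * hadSign x z * α x) • φ x‖ ^ 2

/-! With `ψ` viewed as a unit vector of `ℓ²({0,1}ⁿ, H)`, let `u` be its coordinate projection
onto `L⁺` and `w` its projection onto the span of the Hadamard basis vectors indexed by `L^×`,
so that `Q⁺(L⁺) = ‖u‖² = re ⟪u, ψ⟫` and `Q^×(L^×) = ‖w‖² = re ⟪w, ψ⟫`. Pairing `u + w` with `ψ`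
gives `s := ‖u‖² + ‖w‖² ≤ ‖u + w‖`, while `‖u + w‖² ≤ s (1 + c)` as soon as
`re ⟪u, w⟫ ≤ c ‖u‖ ‖w‖`; hence `s ≤ 1 + c ≤ (1 + c)²`. Since every entry of `H^⊗n` has modulus
`2^{-n/2}`, Cauchy–Schwarz on the supports `L⁺` and `L^×` gives `c = √(2^{-n} |L⁺| |L^×|)`. -/

open Finset RCLike
open scoped ComplexConjugate

local notation "⟪" x ", " y "⟫" => @inner ℂ _ _ x y

theorem norm_sq_add_norm_sq_le_one_add {𝕜 E : Type*} [RCLike 𝕜] [NormedAddCommGroup E]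
    [InnerProductSpace 𝕜 E] {u w v : E} {c : ℝ} (hc : 0 ≤ c) (hv : ‖v‖ ≤ 1)
    (hu : re (inner 𝕜 u v) = ‖u‖ ^ 2) (hw : re (inner 𝕜 w v) = ‖w‖ ^ 2)
    (huw : re (inner 𝕜 u w) ≤ c * (‖u‖ * ‖w‖)) :
    ‖u‖ ^ 2 + ‖w‖ ^ 2 ≤ 1 + c := by
  set s := ‖u‖ ^ 2 + ‖w‖ ^ 2
  have hs : 0 ≤ s := by positivity
  have h_le_norm : s ≤ ‖u + w‖ :=
    calc s = re (inner 𝕜 (u + w) v) := by rw [inner_add_left, map_add, hu, hw]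
      _ ≤ ‖u + w‖ * ‖v‖ := re_inner_le_norm _ _
      _ ≤ ‖u + w‖ := mul_le_of_le_one_right (norm_nonneg _) hv
  have h_norm_sq : ‖u + w‖ ^ 2 ≤ s * (1 + c) := by
    have amgm : 2 * (‖u‖ * ‖w‖) ≤ s := by nlinarith [sq_nonneg (‖u‖ - ‖w‖)]
    rw [norm_add_sq (𝕜 := 𝕜)]
    nlinarith
  nlinarith [pow_le_pow_left₀ hs h_le_norm 2]

section CoordProj

variable {ι H : Type*} [DecidableEq ι]

def coordProj [Zero H] (s : Finset ι) (f : PiLp 2 fun _ : ι => H) : PiLp 2 fun _ : ι => H :=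
  WithLp.toLp 2 fun i => if i ∈ s then f i else 0

@[simp]
theorem coordProj_apply [Zero H] (s : Finset ι) (f : PiLp 2 fun _ : ι => H) (i : ι) :
    coordProj s f i = if i ∈ s then f i else 0 :=
  rfl

variable [Fintype ι] [NormedAddCommGroup H] (s : Finset ι) (f : PiLp 2 fun _ : ι => H)

theorem norm_sq_coordProj : ‖coordProj s f‖ ^ 2 = ∑ i ∈ s, ‖f i‖ ^ 2 := by
  simp [PiLp.norm_sq_eq_of_L2, apply_ite (‖·‖ ^ 2), sum_ite_mem]

theorem sum_norm_coordProj_le : ∑ i, ‖coordProj s f i‖ ≤ √(#s : ℝ) * ‖coordProj s f‖ := by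
  have : ∑ i, ‖coordProj s f i‖ = ∑ i ∈ s, ‖f i‖ := by
    simp only [coordProj_apply, apply_ite norm, norm_zero, sum_ite_mem, univ_inter]
  rw [this, ← Real.sqrt_sq (norm_nonneg (coordProj s f)), ← Real.sqrt_mul (by positivity),
    norm_sq_coordProj]
  exact Real.le_sqrt_of_sq_le (sq_sum_le_card_mul_sum_sq ..)

variable [InnerProductSpace ℂ H]

theorem re_inner_coordProj_self : re ⟪coordProj s f, f⟫ = ‖coordProj s f‖ ^ 2 := by
  have : ⟪coordProj s f, f⟫ = ⟪coordProj s f, coordProj s f⟫ := by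
    simp only [PiLp.inner_apply, coordProj_apply]
    refine sum_congr rfl fun i _ => ?_
    split_ifs <;> simp
  rw [this, inner_self_eq_norm_sq]

end CoordProj

theorem PiLp.norm_inner_le_sum_norm_mul_norm {ι H : Type*} [Fintype ι] [NormedAddCommGroup H]
    [InnerProductSpace ℂ H] (f g : PiLp 2 fun _ : ι => H) :
    ‖⟪f, g⟫‖ ≤ ∑ i, ‖f i‖ * ‖g i‖ := by
  rw [PiLp.inner_apply]
  exact (norm_sum_le _ _).trans (sum_le_sum fun i _ => norm_inner_le_norm _ _)

section HadSign

variable {n : ℕ}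

theorem hadSign_eq_prod (x z : Fin n → Bool) :
    hadSign x z = ∏ i, if x i && z i then (-1 : ℂ) else 1 := by
  rw [hadSign, ← prod_pow_eq_pow_sum]
  exact prod_congr rfl fun i _ => by split <;> simp

theorem hadSign_comm (x z : Fin n → Bool) : hadSign x z = hadSign z x := by
  simp [hadSign, Bool.and_comm]

@[simp]
theorem conj_hadSign (x z : Fin n → Bool) : conj (hadSign x z) = hadSign x z := by
  simp [hadSign]

@[simp]
theorem norm_hadSign (x z : Fin n → Bool) : ‖hadSign x z‖ = 1 := by
  simp [hadSign]

theorem sum_hadSign_mul_hadSign (x y : Fin n → Bool) :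
    ∑ z, hadSign x z * hadSign y z = if x = y then (2 : ℂ) ^ n else 0 := by
  simp only [hadSign_eq_prod, ← prod_mul_distrib]
  rw [← Fintype.prod_sum fun i b =>
    (if x i && b then (-1 : ℂ) else 1) * (if y i && b then (-1 : ℂ) else 1)]
  have factor (i : Fin n) : ∑ b : Bool, (if x i && b then (-1 : ℂ) else 1) *
      (if y i && b then (-1 : ℂ) else 1) = if x i = y i then 2 else 0 := by
    cases x i <;> cases y i <;> norm_num
  simp only [factor]
  split_ifs with hxy
  · simp [hxy]
  · obtain ⟨i, hi⟩ := Function.ne_iff.mp hxy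
    exact prod_eq_zero (mem_univ i) (if_neg hi)

end HadSign

section Hadamard

variable {H : Type*} [NormedAddCommGroup H] [InnerProductSpace ℂ H] {n : ℕ}

/-- `H^⊗n` acting on the first `n` qubits of `(ℂ²)^⊗n ⊗ H ≅ ℓ²({0,1}ⁿ, H)`. -/
noncomputable def hadamard (f : PiLp 2 fun _ : Fin n → Bool => H) :
    PiLp 2 fun _ : Fin n → Bool => H :=
  WithLp.toLp 2 fun z => ∑ x, ((((Real.sqrt (2 ^ n))⁻¹ : ℝ) : ℂ) * hadSign x z) • f x

@[simp]
theorem hadamard_apply (f : PiLp 2 fun _ : Fin n → Bool => H) (z : Fin n → Bool) :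
    hadamard f z = ∑ x, ((((Real.sqrt (2 ^ n))⁻¹ : ℝ) : ℂ) * hadSign x z) • f x :=
  rfl

theorem inner_hadamard_left (f g : PiLp 2 fun _ : Fin n → Bool => H) :
    ⟪hadamard f, g⟫ = ⟪f, hadamard g⟫ := by
  simp only [PiLp.inner_apply, hadamard_apply, sum_inner, inner_sum, inner_smul_left,
    inner_smul_right, map_mul, conj_hadSign, Complex.conj_ofReal]
  rw [sum_comm]
  simp only [hadSign_comm]

theorem hadamard_hadamard (f : PiLp 2 fun _ : Fin n → Bool => H) : hadamard (hadamard f) = f := by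
  ext z
  simp only [hadamard_apply, smul_sum, smul_smul]
  rw [sum_comm]
  simp only [← sum_smul]
  set c : ℂ := (((Real.sqrt (2 ^ n))⁻¹ : ℝ) : ℂ)
  have hc : c * c * 2 ^ n = 1 := by
    rw [← Complex.ofReal_mul, ← mul_inv, Real.mul_self_sqrt (by positivity)]
    push_cast
    exact inv_mul_cancel₀ (pow_ne_zero _ two_ne_zero)
  have coeff (x : Fin n → Bool) :
      ∑ y, c * hadSign y z * (c * hadSign x y) = if x = z then 1 else 0 := by
    calc ∑ y, c * hadSign y z * (c * hadSign x y)
        = c * c * ∑ y, hadSign x y * hadSign z y := by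
          rw [mul_sum]
          exact sum_congr rfl fun y _ => by rw [hadSign_comm y z]; ring
      _ = _ := by rw [sum_hadSign_mul_hadSign]; split_ifs <;> simp [hc]
  simp only [coeff, ite_smul, one_smul, zero_smul, sum_ite_eq', mem_univ, if_true]

theorem norm_hadamard (f : PiLp 2 fun _ : Fin n → Bool => H) : ‖hadamard f‖ = ‖f‖ := by
  rw [norm_eq_sqrt_re_inner (𝕜 := ℂ), inner_hadamard_left, hadamard_hadamard,
    ← norm_eq_sqrt_re_inner]

theorem norm_hadamard_apply_le (f : PiLp 2 fun _ : Fin n → Bool => H) (z : Fin n → Bool) :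
    ‖hadamard f z‖ ≤ (√(2 ^ n))⁻¹ * ∑ x, ‖f x‖ := by
  rw [hadamard_apply, mul_sum]
  refine (norm_sum_le _ _).trans (sum_le_sum fun x _ => ?_)
  simp [norm_smul, abs_of_nonneg (Real.sqrt_nonneg _)]

theorem norm_inner_hadamard_le (f g : PiLp 2 fun _ : Fin n → Bool => H) :
    ‖⟪hadamard f, g⟫‖ ≤ (√(2 ^ n))⁻¹ * (∑ x, ‖f x‖) * ∑ z, ‖g z‖ :=
  calc ‖⟪hadamard f, g⟫‖ ≤ ∑ z, ‖hadamard f z‖ * ‖g z‖ :=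
        PiLp.norm_inner_le_sum_norm_mul_norm _ _
    _ ≤ ∑ z, (√(2 ^ n))⁻¹ * (∑ x, ‖f x‖) * ‖g z‖ :=
        sum_le_sum fun z _ => by gcongr; exact norm_hadamard_apply_le f z
    _ = _ := by rw [← mul_sum]

end Hadamard

theorem sum_norm_sq_add_sum_norm_sq_hadamard_le {H : Type*} [NormedAddCommGroup H]
    [InnerProductSpace ℂ H] {n : ℕ} (v : PiLp 2 fun _ : Fin n → Bool => H) (hv : ‖v‖ ≤ 1)
    (Lp Lt : Finset (Fin n → Bool)) :
    ∑ x ∈ Lp, ‖v x‖ ^ 2 + ∑ z ∈ Lt, ‖hadamard v z‖ ^ 2 ≤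
      1 + √((2 ^ n : ℝ)⁻¹ * #Lp * #Lt) := by
  set u := coordProj Lp v
  set q := coordProj Lt (hadamard v)
  have hw : re ⟪hadamard q, v⟫ = ‖hadamard q‖ ^ 2 := by
    rw [inner_hadamard_left, norm_hadamard, re_inner_coordProj_self]
  have hcross : re ⟪u, hadamard q⟫ ≤ √((2 ^ n : ℝ)⁻¹ * #Lp * #Lt) * (‖u‖ * ‖hadamard q‖) :=
    calc re ⟪u, hadamard q⟫ = re ⟪hadamard u, q⟫ := by rw [inner_hadamard_left]
      _ ≤ ‖⟪hadamard u, q⟫‖ := re_le_norm _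
      _ ≤ (√(2 ^ n))⁻¹ * (∑ x, ‖u x‖) * ∑ z, ‖q z‖ := norm_inner_hadamard_le u q
      _ ≤ (√(2 ^ n))⁻¹ * (√(#Lp : ℝ) * ‖u‖) * (√(#Lt : ℝ) * ‖q‖) := by
        gcongr
        exacts [sum_norm_coordProj_le Lp v, sum_norm_coordProj_le Lt _]
      _ = _ := by
        rw [norm_hadamard, Real.sqrt_mul (by positivity), Real.sqrt_mul (by positivity),
          Real.sqrt_inv]
        ring
  have key := norm_sq_add_norm_sq_le_one_add (by positivity) hv (re_inner_coordProj_self Lp v)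
    hw hcross
  rwa [norm_hadamard, norm_sq_coordProj, norm_sq_coordProj] at key

/-- Two-basis uncertainty relation (Theorem 2 of the paper):
`Q⁺(L⁺) + Q^×(L^×) ≤ (1 + √(2^{-n}·|L⁺|·|L^×|))²`. -/
theorem uncertainty_two_bases {H : Type*} [NormedAddCommGroup H] [InnerProductSpace ℂ H]
    {n : ℕ} (α : (Fin n → Bool) → ℂ) (φ : (Fin n → Bool) → H)
    (hφ : ∀ x, ‖φ x‖ = 1) (hα : ∑ x : Fin n → Bool, ‖α x‖ ^ 2 = 1)
    (Lp Lt : Finset (Fin n → Bool)) :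
    ∑ x ∈ Lp, Qplus α x + ∑ z ∈ Lt, Qtimes α φ z ≤
      (1 + Real.sqrt ((2 ^ n : ℝ)⁻¹ * Lp.card * Lt.card)) ^ 2 := by
  set ψ : PiLp 2 fun _ : Fin n → Bool => H := WithLp.toLp 2 fun x => α x • φ x
  have hψ : ‖ψ‖ ≤ 1 := by
    rw [← sq_le_one_iff₀ (norm_nonneg ψ)]
    simp [ψ, PiLp.norm_sq_eq_of_L2, norm_smul, hφ, hα]
  have hQplus (x) : Qplus α x = ‖ψ x‖ ^ 2 := by simp [Qplus, ψ, norm_smul, hφ]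
  have hQtimes (z) : Qtimes α φ z = ‖hadamard ψ z‖ ^ 2 := by simp [Qtimes, ψ, smul_smul]
  simp only [hQplus, hQtimes]
  refine (sum_norm_sq_add_sum_norm_sq_hadamard_le ψ hψ Lp Lt).trans ?_
  nlinarith [Real.sqrt_nonneg ((2 ^ n : ℝ)⁻¹ * Lp.card * Lt.card)]
end

section
/- Let ψ = Σ_{x∈{0,1}ⁿ} α_x |x⟩ ⊗ |φ_x⟩ be a unit vector with each φ_x a unit vector, and define q⁺_∞ = max_x |α_x|² and q^×_∞ = max_z ‖Σ_x 2^{-n/2}(-1)^{x·z} α_x φ_x‖². Then q⁺_∞ · q^×_∞ ≤ (1/4)·(1 + 2^{-n/2})⁴. -/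
open scoped BigOperators
set_option maxHeartbeats 1000000

/-- Corollary 1 of the paper: the maximal probabilities of the computational- and
Hadamard-basis measurement distributions satisfy
`q⁺_∞ · q^×_∞ ≤ (1/4)·(1 + 2^{-n/2})⁴`. -/
theorem max_prob_uncertainty {H : Type*} [NormedAddCommGroup H] [InnerProductSpace ℂ H]
    {n : ℕ} (α : (Fin n → Bool) → ℂ) (φ : (Fin n → Bool) → H)
    (hφ : ∀ x, ‖φ x‖ = 1) (hα : ∑ x : Fin n → Bool, ‖α x‖ ^ 2 = 1) :
    (⨆ x : Fin n → Bool, Qplus α x) * (⨆ z : Fin n → Bool, Qtimes α φ z) ≤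
      (1 / 4) * (1 + (Real.sqrt (2 ^ n))⁻¹) ^ 4 := by
  classical
  set c : ℝ := (Real.sqrt (2 ^ n))⁻¹ with hc
  have hsq : (0:ℝ) < Real.sqrt (2 ^ n) := Real.sqrt_pos.mpr (by positivity)
  have hc0 : 0 ≤ c := by positivity
  have hcs : c * Real.sqrt (2 ^ n) = 1 := inv_mul_cancel₀ (ne_of_gt hsq)
  obtain ⟨x0, hx0⟩ := Finite.exists_max (fun x : Fin n → Bool => ‖α x‖)
  set a : ℝ := ‖α x0‖ with ha
  have ha0 : 0 ≤ a := norm_nonneg _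
  set p : ℝ := a ^ 2 with hp
  have hp0 : 0 ≤ p := sq_nonneg _
  have hp1 : p ≤ 1 := by
    rw [← hα]
    exact Finset.single_le_sum (fun x _ => sq_nonneg ‖α x‖) (Finset.mem_univ x0)
  have hsum_rest : ∑ x ∈ Finset.univ.erase x0, ‖α x‖ ^ 2 = 1 - p := by
    have h := Finset.add_sum_erase Finset.univ (fun x => ‖α x‖ ^ 2) (Finset.mem_univ x0)
    rw [hα] at h
    linarith
  have hsupP : (⨆ x : Fin n → Bool, Qplus α x) = p := by
    apply le_antisymm
    · exact ciSup_le fun x => pow_le_pow_left₀ (norm_nonneg _) (hx0 x) 2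
    · exact le_ciSup (Finite.bddAbove_range (fun x : Fin n → Bool => Qplus α x)) x0
  set s : ℝ := Real.sqrt (1 - p) with hs
  have hs0 : 0 ≤ s := Real.sqrt_nonneg _
  have hs2 : s ^ 2 = 1 - p := Real.sq_sqrt (by linarith)
  have hsupT : (⨆ z : Fin n → Bool, Qtimes α φ z) ≤ (c * a + s) ^ 2 := by
    apply ciSup_le
    intro z
    have hnorm : ‖∑ x : Fin n → Bool, (((c : ℝ) : ℂ) * hadSign x z * α x) • φ x‖
        ≤ c * a + s := by
      have hterm : ∀ x : Fin n → Bool,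
          ‖(((c : ℝ) : ℂ) * hadSign x z * α x) • φ x‖ = c * ‖α x‖ := by
        intro x
        rw [norm_smul, hφ x, mul_one, norm_mul, norm_mul]
        have h1 : ‖hadSign x z‖ = 1 := by
          simp [hadSign]
        rw [h1, Complex.norm_real, Real.norm_eq_abs, abs_of_nonneg hc0, mul_one]
      calc ‖∑ x : Fin n → Bool, (((c : ℝ) : ℂ) * hadSign x z * α x) • φ x‖
          ≤ ∑ x : Fin n → Bool, ‖(((c : ℝ) : ℂ) * hadSign x z * α x) • φ x‖ :=
            norm_sum_le _ _
        _ = ∑ x : Fin n → Bool, c * ‖α x‖ := by simp only [hterm]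
        _ = c * a + ∑ x ∈ Finset.univ.erase x0, c * ‖α x‖ := by
            rw [← Finset.add_sum_erase Finset.univ (fun x => c * ‖α x‖) (Finset.mem_univ x0)]
        _ ≤ c * a + s := by
            gcongr
            have hcard : (Finset.univ.erase x0).card ≤ (2 : ℕ) ^ n := by
              calc (Finset.univ.erase x0).card ≤ (Finset.univ : Finset (Fin n → Bool)).card :=
                    Finset.card_le_card (Finset.erase_subset _ _)
                _ = 2 ^ n := by simp [Finset.card_univ]
            have hCS : (∑ x ∈ Finset.univ.erase x0, ‖α x‖) ^ 2
                ≤ (2 : ℝ) ^ n * (1 - p) := by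
              calc (∑ x ∈ Finset.univ.erase x0, ‖α x‖) ^ 2
                  ≤ (Finset.univ.erase x0).card * ∑ x ∈ Finset.univ.erase x0, ‖α x‖ ^ 2 :=
                    sq_sum_le_card_mul_sum_sq
                _ ≤ (2 : ℝ) ^ n * (1 - p) := by
                    rw [hsum_rest]
                    have h1p : (0:ℝ) ≤ 1 - p := by linarith
                    have hcc : ((Finset.univ.erase x0).card : ℝ) ≤ (2:ℝ) ^ n := by
                      exact_mod_cast hcard
                    exact mul_le_mul_of_nonneg_right hcc h1p
            have hsum0 : 0 ≤ ∑ x ∈ Finset.univ.erase x0, ‖α x‖ :=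
              Finset.sum_nonneg fun x _ => norm_nonneg _
            have hle : ∑ x ∈ Finset.univ.erase x0, ‖α x‖
                ≤ Real.sqrt (2 ^ n) * s := by
              have h1 : ∑ x ∈ Finset.univ.erase x0, ‖α x‖
                  ≤ Real.sqrt ((2:ℝ)^n * (1 - p)) := by
                rw [← Real.sqrt_sq hsum0]
                exact Real.sqrt_le_sqrt hCS
              rw [Real.sqrt_mul (by positivity)] at h1
              exact h1
            calc ∑ x ∈ Finset.univ.erase x0, c * ‖α x‖
                = c * ∑ x ∈ Finset.univ.erase x0, ‖α x‖ := by rw [Finset.mul_sum]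
              _ ≤ c * (Real.sqrt (2 ^ n) * s) := mul_le_mul_of_nonneg_left hle hc0
              _ = s := by rw [← mul_assoc, hcs, one_mul]
    calc Qtimes α φ z
        = ‖∑ x : Fin n → Bool, (((c : ℝ) : ℂ) * hadSign x z * α x) • φ x‖ ^ 2 := rfl
      _ ≤ (c * a + s) ^ 2 := pow_le_pow_left₀ (norm_nonneg _) hnorm 2
  have has : a * s ≤ 1 / 2 := by nlinarith [sq_nonneg (a - s)]
  have hfinal : p * (c * a + s) ^ 2 ≤ (1 / 4) * (1 + c) ^ 4 := by
    have hpp : p ^ 2 ≤ 1 := by nlinarith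
    have e1 : c ^ 2 * p ^ 2 ≤ c ^ 2 := mul_le_of_le_one_right (sq_nonneg c) hpp
    have t1 : 0 ≤ c * p * (1 / 2 - a * s) := mul_nonneg (mul_nonneg hc0 hp0) (by linarith)
    have t2 : 0 ≤ c * (1 - p) := mul_nonneg hc0 (by linarith)
    have e2 : 2 * c * p * (a * s) ≤ c := by nlinarith [t1, t2]
    have e3 : p * (1 - p) ≤ 1 / 4 := by nlinarith [sq_nonneg (p - 1/2)]
    have expand : p * (c * a + s) ^ 2 = c ^ 2 * p ^ 2 + 2 * c * p * (a * s) + p * s ^ 2 := by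
      rw [hp]; ring
    have key : p * (c * a + s) ^ 2 ≤ (c + 1 / 2) ^ 2 := by
      rw [expand, hs2]; nlinarith [e1, e2, e3]
    have key2 : (c + 1 / 2) ^ 2 ≤ (1 / 4) * (1 + c) ^ 4 := by
      nlinarith [sq_nonneg c, mul_nonneg (mul_nonneg hc0 hc0) hc0, sq_nonneg (c * c)]
    linarith
  rw [hsupP]
  calc p * (⨆ z : Fin n → Bool, Qtimes α φ z) ≤ p * (c * a + s) ^ 2 :=
        mul_le_mul_of_nonneg_left hsupT hp0
    _ ≤ (1 / 4) * (1 + c) ^ 4 := hfinal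
end

section
/- Let Q⁰, …, Q^N be probability distributions on {0,1}ⁿ arising from measuring a fixed n-qubit (pure, with ancilla) state in N+1 pairwise mutually unbiased bases. Then for any sets L⁰, …, L^N ⊆ {0,1}ⁿ: Σ_{i=0}^{N} Q^i(L^i) ≤ 1 − C(N+1,2) + Σ_{0≤j<k≤N} (1 + √(2^{-n}·|L^j|·|L^k|))². -/
/-!
Let `P_i` be the projection onto the span of the vectors of the `i`-th basis indexed by `L^i`
(tensored with the ancilla space), so that `Q^i(L^i) = ⟪ψ, P_i ψ⟫ = ‖P_i ψ‖²`. For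
`s = ∑ ‖P_i ψ‖²`, Cauchy–Schwarz gives `s ≤ ‖∑ P_i ψ‖`, and expanding the square gives
`s² ≤ s + ∑_{j ≠ k} ‖⟪P_j ψ, P_k ψ⟫‖`; as `s² ≥ 2s - 1`, this yields
`s ≤ 1 + ∑_{j ≠ k} ‖⟪P_j ψ, P_k ψ⟫‖`. Mutual unbiasedness and Cauchy–Schwarz over `L^j`, `L^k`
bound each cross term by `√(2^{-n} |L^j| |L^k|)`.
-/

open Finset RCLike
open scoped InnerProductSpace ComplexConjugate

section SumOfProjections

variable {𝕜 E ι : Type*} [RCLike 𝕜] [NormedAddCommGroup E] [InnerProductSpace 𝕜 E]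

lemma norm_le_of_inner_eq_inner_self {ψ g : E} (h : ⟪ψ, g⟫_𝕜 = ⟪g, g⟫_𝕜) : ‖g‖ ≤ ‖ψ‖ := by
  have hg : ‖g‖ ^ 2 ≤ ‖ψ‖ * ‖g‖ := by
    rw [← inner_self_eq_norm_sq (𝕜 := 𝕜), ← h]
    exact re_inner_le_norm ψ g
  nlinarith [norm_nonneg g, norm_nonneg ψ]

theorem sum_norm_sq_le_one_add_sum_offDiag [Fintype ι] [DecidableEq ι] {ψ : E} (hψ : ‖ψ‖ ≤ 1)
    (g : ι → E) (hg : ∀ i, ⟪ψ, g i⟫_𝕜 = ⟪g i, g i⟫_𝕜) :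
    ∑ i, ‖g i‖ ^ 2 ≤ 1 + ∑ j, ∑ k, if j = k then 0 else ‖⟪g j, g k⟫_𝕜‖ := by
  set s := ∑ i, ‖g i‖ ^ 2
  set D := ∑ j, ∑ k, if j = k then 0 else ‖⟪g j, g k⟫_𝕜‖
  have hs : s ≤ ‖∑ i, g i‖ := calc
    s = re ⟪ψ, ∑ i, g i⟫_𝕜 := by
      simp only [s, inner_sum, map_sum, hg, inner_self_eq_norm_sq]
    _ ≤ ‖ψ‖ * ‖∑ i, g i‖ := re_inner_le_norm _ _
    _ ≤ ‖∑ i, g i‖ := mul_le_of_le_one_left (norm_nonneg _) hψ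
  have hsum : ‖∑ i, g i‖ ^ 2 ≤ s + D := calc
    ‖∑ i, g i‖ ^ 2 = ∑ j, ∑ k, re ⟪g j, g k⟫_𝕜 := by
      simp only [← inner_self_eq_norm_sq (𝕜 := 𝕜), sum_inner, inner_sum, map_sum]
      exact sum_comm
    _ ≤ ∑ j, ∑ k, ((if j = k then ‖g j‖ ^ 2 else 0) + if j = k then 0 else ‖⟪g j, g k⟫_𝕜‖) := by
      gcongr with j _ k _
      split_ifs with hjk
      · simp [hjk]
      · simpa using re_le_norm _
    _ = s + D := by simp only [sum_add_distrib, sum_ite_eq, mem_univ, if_true, s, D]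
  have hs0 : 0 ≤ s := by positivity
  nlinarith [sq_nonneg (s - 1), pow_le_pow_left₀ hs0 hs 2]

end SumOfProjections

section Amplitude

variable {𝕜 H X Z : Type*} [RCLike 𝕜] [NormedAddCommGroup H] [InnerProductSpace 𝕜 H] [Fintype X]

lemma EuclideanSpace.inner_toLp_toLp_eq_sum (e e' : X → 𝕜) :
    ⟪(WithLp.toLp 2 e : EuclideanSpace 𝕜 X), WithLp.toLp 2 e'⟫_𝕜 = ∑ x, conj (e x) * e' x := by
  simp [EuclideanSpace.inner_toLp_toLp, dotProduct, mul_comm]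

/-- `(⟨e| ⊗ id) ψ`, whose squared norm is the probability of the outcome `e`. -/
def amplitude (e : EuclideanSpace 𝕜 X) (ψ : X → H) : H := ∑ x, conj (e x) • ψ x

/-- For orthonormal `b`, the orthogonal projection of `ψ ∈ ℓ²(X, H)` onto
`span {b z | z ∈ L} ⊗ H`. -/
def partialProj (b : Z → EuclideanSpace 𝕜 X) (L : Finset Z) (ψ : X → H) :
    PiLp 2 fun _ : X => H :=
  WithLp.toLp 2 fun x => ∑ z ∈ L, b z x • amplitude (b z) ψ

lemma inner_amplitude_left (e : EuclideanSpace 𝕜 X) (ψ : X → H) (h : H) :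
    ⟪amplitude e ψ, h⟫_𝕜 = ∑ x, e x * ⟪ψ x, h⟫_𝕜 := by
  simp [amplitude, sum_inner, inner_smul_left]

lemma inner_toLp_partialProj (b : Z → EuclideanSpace 𝕜 X) (L : Finset Z) (ψ : X → H) :
    ⟪(WithLp.toLp 2 ψ : PiLp 2 fun _ : X => H), partialProj b L ψ⟫_𝕜 =
      ((∑ z ∈ L, ‖amplitude (b z) ψ‖ ^ 2 : ℝ) : 𝕜) := by
  simp only [partialProj, PiLp.inner_apply, inner_sum, inner_smul_right]
  rw [sum_comm]
  push_cast
  refine sum_congr rfl fun z _ => ?_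
  rw [← inner_self_eq_norm_sq_to_K, inner_amplitude_left]

lemma inner_partialProj_partialProj (b b' : Z → EuclideanSpace 𝕜 X) (L L' : Finset Z)
    (ψ : X → H) :
    ⟪partialProj b L ψ, partialProj b' L' ψ⟫_𝕜 = ∑ z ∈ L, ∑ y ∈ L',
      ⟪b z, b' y⟫_𝕜 * ⟪amplitude (b z) ψ, amplitude (b' y) ψ⟫_𝕜 := by
  simp only [partialProj, PiLp.inner_apply, inner_sum, sum_inner, inner_smul_left,
    inner_smul_right, mul_sum]
  rw [sum_comm_cycle]
  refine sum_congr rfl fun z _ => ?_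
  rw [sum_comm]
  refine sum_congr rfl fun y _ => ?_
  rw [sum_mul]
  refine sum_congr rfl fun x _ => ?_
  rw [RCLike.inner_apply]
  ring

variable {b : Z → EuclideanSpace 𝕜 X} (hb : Orthonormal 𝕜 b) (L : Finset Z) (ψ : X → H)
include hb

lemma inner_partialProj_self :
    ⟪partialProj b L ψ, partialProj b L ψ⟫_𝕜 = ((∑ z ∈ L, ‖amplitude (b z) ψ‖ ^ 2 : ℝ) : 𝕜) := by
  classical
  rw [inner_partialProj_partialProj]
  push_cast
  refine sum_congr rfl fun z hz => ?_
  simp [orthonormal_iff_ite.mp hb, hz, inner_self_eq_norm_sq_to_K]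

lemma norm_sq_partialProj : ‖partialProj b L ψ‖ ^ 2 = ∑ z ∈ L, ‖amplitude (b z) ψ‖ ^ 2 := by
  rw [← inner_self_eq_norm_sq (𝕜 := 𝕜), inner_partialProj_self hb, ofReal_re]

lemma sum_norm_sq_amplitude_le :
    ∑ z ∈ L, ‖amplitude (b z) ψ‖ ^ 2 ≤ ‖(WithLp.toLp 2 ψ : PiLp 2 fun _ : X => H)‖ ^ 2 := by
  rw [← norm_sq_partialProj hb]
  gcongr
  exact norm_le_of_inner_eq_inner_self <| by
    rw [inner_toLp_partialProj, inner_partialProj_self hb]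

lemma sum_norm_amplitude_le :
    ∑ z ∈ L, ‖amplitude (b z) ψ‖ ≤ √(#L) * ‖(WithLp.toLp 2 ψ : PiLp 2 fun _ : X => H)‖ := by
  rw [← Real.sqrt_sq (norm_nonneg (WithLp.toLp 2 ψ : PiLp 2 fun _ : X => H)),
    ← Real.sqrt_mul (by positivity)]
  refine Real.le_sqrt_of_sq_le (sq_sum_le_card_mul_sum_sq.trans ?_)
  gcongr
  exact sum_norm_sq_amplitude_le hb L ψ

lemma norm_inner_partialProj_le {b' : Z → EuclideanSpace 𝕜 X} (hb' : Orthonormal 𝕜 b') {c : ℝ}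
    (hc : ∀ z y, ‖⟪b z, b' y⟫_𝕜‖ ^ 2 ≤ c) (L' : Finset Z) :
    ‖⟪partialProj b L ψ, partialProj b' L' ψ⟫_𝕜‖ ≤
      √(c * #L * #L') * ‖(WithLp.toLp 2 ψ : PiLp 2 fun _ : X => H)‖ ^ 2 := by
  set r := ‖(WithLp.toLp 2 ψ : PiLp 2 fun _ : X => H)‖
  rw [inner_partialProj_partialProj]
  calc _ ≤ ∑ z ∈ L, ∑ y ∈ L', √c * (‖amplitude (b z) ψ‖ * ‖amplitude (b' y) ψ‖) := by
        refine (norm_sum_le _ _).trans (sum_le_sum fun z _ => (norm_sum_le _ _).trans ?_)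
        gcongr with y
        rw [norm_mul]
        exact mul_le_mul (Real.le_sqrt_of_sq_le (hc z y)) (norm_inner_le_norm _ _)
          (by positivity) (by positivity)
    _ = √c * ((∑ z ∈ L, ‖amplitude (b z) ψ‖) * ∑ y ∈ L', ‖amplitude (b' y) ψ‖) := by
        rw [sum_mul_sum, mul_sum]
        simp only [mul_sum]
    _ ≤ √c * ((√(#L) * r) * (√(#L') * r)) := by
        gcongr
        exacts [sum_norm_amplitude_le hb L ψ, sum_norm_amplitude_le hb' L' ψ]
    _ = √(c * #L * #L') * r ^ 2 := by
        rw [Real.sqrt_mul' _ (by positivity), Real.sqrt_mul' _ (by positivity)]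
        ring

end Amplitude

section OrderedPairs

variable {ι : Type*} [Fintype ι] [LinearOrder ι]

lemma sum_sum_ite_ne_eq_sum_sum_ite_lt {M : Type*} [AddCommMonoid M] (f : ι → ι → M) :
    ∑ j, ∑ k, (if j = k then 0 else f j k) = ∑ j, ∑ k, if j < k then f j k + f k j else 0 := by
  have hsplit : ∀ j k, (if j = k then 0 else f j k) =
      (if j < k then f j k else 0) + if k < j then f j k else 0 := by
    intro j k
    rcases lt_trichotomy j k with h | rfl | h
    · simp [h, h.ne, h.not_gt]
    · simp
    · simp [h, h.ne', h.not_gt]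
  simp only [hsplit, sum_add_distrib]
  rw [sum_comm (f := fun j k => if k < j then f j k else 0), ← sum_add_distrib]
  refine sum_congr rfl fun j _ => ?_
  rw [← sum_add_distrib]
  exact sum_congr rfl fun k _ => by split_ifs <;> simp

lemma sum_sum_ite_lt_one :
    ∑ j : ι, ∑ k : ι, (if j < k then (1 : ℝ) else 0) = (Fintype.card ι).choose 2 := by
  rw [← Fintype.card_product_filter_lt, card_filter, ← univ_product_univ, sum_product]
  push_cast
  rfl

lemma sum_sum_ite_ne_le_sum_sum_ite_lt_one_add_sq {τ : ι → ι → ℝ} (hτ : ∀ j k, 0 ≤ τ j k)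
    (hτ_comm : ∀ j k, τ k j = τ j k) :
    ∑ j, ∑ k, (if j = k then 0 else τ j k) ≤
      ∑ j, ∑ k, (if j < k then (1 + τ j k) ^ 2 else 0) - (Fintype.card ι).choose 2 := by
  rw [sum_sum_ite_ne_eq_sum_sum_ite_lt, ← sum_sum_ite_lt_one, ← sum_sub_distrib]
  gcongr with j _ k _
  rw [← sum_sub_distrib]
  gcongr with k _
  split_ifs
  · nlinarith [hτ j k, hτ_comm j k]
  · simp

end OrderedPairs

/-- Generalized uncertainty relation for `N+1` mutually unbiased bases (Theorem 3).

The purified state `ψ = ∑ x, |x⟩ ⊗ v x` (with `v x = α x • φ x`) is a unit vector,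
i.e. `∑ x ‖v x‖² = 1`. The `i`-th basis is given by its coordinates in the computational
basis: `b i z x` is the `x`-coordinate of the `z`-th vector of basis `i`; each basis is
orthonormal, and mutual unbiasedness says any two vectors from distinct bases have
squared overlap `2^{-n}`. The distribution obtained by measuring in basis `i` is
`Q^i(z) = ‖∑ x, conj (b i z x) • v x‖²`. -/
theorem uncertainty_mub {H : Type*} [NormedAddCommGroup H] [InnerProductSpace ℂ H]
    {n N : ℕ} (v : (Fin n → Bool) → H)
    (hv : ∑ x : Fin n → Bool, ‖v x‖ ^ 2 = 1)
    (b : Fin (N + 1) → (Fin n → Bool) → (Fin n → Bool) → ℂ)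
    (horth : ∀ i z z', ∑ x : Fin n → Bool, starRingEnd ℂ (b i z x) * b i z' x =
      if z = z' then 1 else 0)
    (hmub : ∀ i j, i ≠ j → ∀ z w,
      ‖∑ x : Fin n → Bool, starRingEnd ℂ (b i z x) * b j w x‖ ^ 2 = ((2 : ℝ) ^ n)⁻¹)
    (L : Fin (N + 1) → Finset (Fin n → Bool)) :
    ∑ i : Fin (N + 1), ∑ z ∈ L i, ‖∑ x : Fin n → Bool, (starRingEnd ℂ (b i z x)) • v x‖ ^ 2 ≤
      1 - ((N + 1).choose 2 : ℝ) +
        ∑ j : Fin (N + 1), ∑ k : Fin (N + 1), (if j < k then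
          (1 + Real.sqrt (((2 : ℝ) ^ n)⁻¹ * (L j).card * (L k).card)) ^ 2 else 0) := by
  have hψ : ‖(WithLp.toLp 2 v : PiLp 2 fun _ : Fin n → Bool => H)‖ ^ 2 = 1 := by
    rw [PiLp.norm_sq_eq_of_L2]
    exact hv
  set e := fun i z => (WithLp.toLp 2 (b i z) : EuclideanSpace ℂ (Fin n → Bool))
  have he : ∀ i, Orthonormal ℂ (e i) := fun i => orthonormal_iff_ite.mpr fun z z' => by
    rw [EuclideanSpace.inner_toLp_toLp_eq_sum, horth]
  set g := fun i => partialProj (e i) (L i) v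
  have hoff : ∀ j k, j ≠ k → ‖⟪g j, g k⟫_ℂ‖ ≤ √(((2 : ℝ) ^ n)⁻¹ * #(L j) * #(L k)) :=
    fun j k hjk => by
      simpa only [hψ, mul_one] using norm_inner_partialProj_le (he j) (L j) v (he k)
        (fun z y => by rw [EuclideanSpace.inner_toLp_toLp_eq_sum, hmub j k hjk]) (L k)
  calc _ = ∑ i, ‖g i‖ ^ 2 := by simp only [g, norm_sq_partialProj (he _)]; rfl
    _ ≤ 1 + ∑ j, ∑ k, if j = k then 0 else ‖⟪g j, g k⟫_ℂ‖ :=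
        sum_norm_sq_le_one_add_sum_offDiag
          ((pow_le_one_iff_of_nonneg (norm_nonneg _) two_ne_zero).mp hψ.le) g
          fun i => by rw [inner_toLp_partialProj, inner_partialProj_self (he i)]
    _ ≤ 1 + ∑ j, ∑ k, if j = k then 0 else √(((2 : ℝ) ^ n)⁻¹ * #(L j) * #(L k)) := by
        gcongr with j _ k _
        split_ifs with hjk
        exacts [le_rfl, hoff j k hjk]
    _ ≤ _ := by
        have := sum_sum_ite_ne_le_sum_sum_ite_lt_one_add_sq
          (τ := fun j k : Fin (N + 1) => √(((2 : ℝ) ^ n)⁻¹ * #(L j) * #(L k)))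
          (fun _ _ => Real.sqrt_nonneg _) (fun j k => by simp only [mul_right_comm])
        rw [Fintype.card_fin] at this
        linarith
end

section
/- Fix 0 < ε and let N be a natural number with 0 < N < 2^{(1/4−ε)n}. For distributions Q⁰,…,Q^N obtained by measuring an n-qubit state in N+1 mutually unbiased bases, with min-entropies H^i_∞ = −log₂ max_x Q^i(x), one has Σ_{i=0}^N H^i_∞ ≥ (N+1)(log₂(N+1) − μ(n)) where μ(n) is a function that is negligible in n (smaller than any inverse polynomial for large n). -/
/-!
Pick in each basis `i` an outcome `zᵢ` of maximal probability. The map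
`v ↦ (⟪bᵢ(zᵢ), v⟫)ᵢ` has squared norm at most that of the Gram matrix of the vectors `bᵢ(zᵢ)`,
which has unit diagonal and off-diagonal entries of modulus `2^{-n/2}`; hence
`∑ᵢ max Qⁱ ≤ 1 + (N+1)·2^{-n/2} ≤ 1 + 2·2^{-(1/4+ε)n}`. Concavity of `log` then gives
`∑ᵢ -log₂ max Qⁱ ≥ (N+1)(log₂(N+1) - log₂ ∑ᵢ max Qⁱ)`, and `μ(n) = log₂(1 + 2·2^{-(1/4+ε)n})`
decays exponentially.
-/

def Negligible (μ : ℕ → ℝ) : Prop :=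
  ∀ c : ℕ, ∃ n₀ : ℕ, ∀ n ≥ n₀, |μ n| ≤ 1 / (n : ℝ) ^ c

open Finset Filter Real
open scoped InnerProductSpace ComplexConjugate Topology

section WeightedSums

variable {ι X H : Type*} [Fintype ι] [Fintype X] [NormedAddCommGroup H] [InnerProductSpace ℂ H]

theorem sum_norm_sq_sum_smul (c : ι → X → ℂ) (u : X → H) :
    ∑ i, ‖∑ x, c i x • u x‖ ^ 2 =
      (∑ x, ∑ y, (∑ i, conj (c i x) * c i y) * ⟪u x, u y⟫_ℂ).re := by
  have hterm : ∀ i, ⟪∑ x, c i x • u x, ∑ y, c i y • u y⟫_ℂ =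
      ∑ x, ∑ y, conj (c i x) * c i y * ⟪u x, u y⟫_ℂ := by
    intro i
    rw [sum_inner]
    simp only [inner_sum, inner_smul_left, inner_smul_right]
    exact sum_congr rfl fun x _ => sum_congr rfl fun y _ => by ring
  simp_rw [norm_sq_eq_re_inner (𝕜 := ℂ), RCLike.re_to_complex, ← Complex.re_sum, hterm, sum_mul]
  rw [sum_comm]
  exact congrArg Complex.re (sum_congr rfl fun x _ => sum_comm)

theorem sum_inner_sum_conj_smul (β : ι → X → ℂ) (v : X → H) (w : ι → H) :
    ∑ i, ⟪∑ x, conj (β i x) • v x, w i⟫_ℂ = ∑ x, ⟪v x, ∑ i, β i x • w i⟫_ℂ := by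
  simp only [sum_inner, inner_sum, inner_smul_left, inner_smul_right, Complex.conj_conj]
  exact sum_comm

theorem sum_mul_conj_eq_ite_of_orthonormal [DecidableEq X] {B : X → X → ℂ}
    (hB : ∀ z z', ∑ x, conj (B z x) * B z' x = if z = z' then 1 else 0) (x y : X) :
    ∑ z, B z x * conj (B z y) = if x = y then 1 else 0 := by
  have hunitary : star (Matrix.of fun x z => B z x) * Matrix.of (fun x z => B z x) = 1 := by
    ext z z'
    simpa [Matrix.mul_apply, Matrix.one_apply] using hB z z'
  have hMM : (Matrix.of fun x z => B z x) * star (Matrix.of fun x z => B z x) = 1 :=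
    mul_eq_one_comm.mp hunitary
  have := congrFun₂ hMM x y
  simpa [Matrix.mul_apply, Matrix.one_apply] using this

theorem sum_norm_sq_sum_conj_smul_of_orthonormal [DecidableEq X] {B : X → X → ℂ}
    (hB : ∀ z z', ∑ x, conj (B z x) * B z' x = if z = z' then 1 else 0) (v : X → H) :
    ∑ z, ‖∑ x, conj (B z x) • v x‖ ^ 2 = ∑ x, ‖v x‖ ^ 2 := by
  simp only [sum_norm_sq_sum_smul, Complex.conj_conj, sum_mul_conj_eq_ite_of_orthonormal hB,
    ite_mul, one_mul, zero_mul, sum_ite_eq, mem_univ, if_true, Complex.re_sum]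
  exact sum_congr rfl fun x _ => inner_self_eq_norm_sq (𝕜 := ℂ) (v x)

theorem re_sum_mul_inner_le_of_norm_le {G : ι → ι → ℂ} {α : ℝ} (hα : 0 ≤ α)
    (hdiag : ∀ i, ‖G i i‖ ≤ 1) (hoff : ∀ i j, i ≠ j → ‖G i j‖ ≤ α) (w : ι → H) :
    (∑ i, ∑ j, G i j * ⟪w i, w j⟫_ℂ).re ≤ (1 + α * Fintype.card ι) * ∑ i, ‖w i‖ ^ 2 := by
  classical
  have hG : ∀ i j, ‖G i j‖ ≤ (if i = j then 1 else 0) + α := by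
    intro i j
    split_ifs with hij
    · subst hij; linarith [hdiag i]
    · linarith [hoff i j hij]
  have hentry : ∀ i j, (G i j * ⟪w i, w j⟫_ℂ).re ≤
      ((if i = j then 1 else 0) + α) * (‖w i‖ * ‖w j‖) :=
    fun i j => calc
      (G i j * ⟪w i, w j⟫_ℂ).re ≤ ‖G i j‖ * ‖⟪w i, w j⟫_ℂ‖ :=
        (Complex.re_le_norm _).trans (norm_mul _ _).le
      _ ≤ _ := mul_le_mul (hG i j) (norm_inner_le_norm _ _) (norm_nonneg _)
          (by positivity)
  calc (∑ i, ∑ j, G i j * ⟪w i, w j⟫_ℂ).re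
      ≤ ∑ i, ∑ j, ((if i = j then 1 else 0) + α) * (‖w i‖ * ‖w j‖) := by
        simp only [Complex.re_sum]
        exact sum_le_sum fun i _ => sum_le_sum fun j _ => hentry i j
    _ = ∑ i, ‖w i‖ ^ 2 + α * (∑ i, ‖w i‖) ^ 2 := by
        simp only [add_mul, ite_mul, one_mul, zero_mul, sum_add_distrib, sum_ite_eq,
          mem_univ, if_true, sq, mul_sum, sum_mul]
        exact congrArg _ sum_comm
    _ ≤ (1 + α * Fintype.card ι) * ∑ i, ‖w i‖ ^ 2 := by
        have := sq_sum_le_card_mul_sum_sq (s := univ) (f := fun i => ‖w i‖)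
        rw [card_univ] at this
        nlinarith

theorem sum_norm_sq_sum_conj_smul_le {β : ι → X → ℂ} {α : ℝ} (hα : 0 ≤ α)
    (hdiag : ∀ i, ‖∑ x, conj (β i x) * β i x‖ ≤ 1)
    (hoff : ∀ i j, i ≠ j → ‖∑ x, conj (β i x) * β j x‖ ≤ α) (v : X → H) :
    ∑ i, ‖∑ x, conj (β i x) • v x‖ ^ 2 ≤ (1 + α * Fintype.card ι) * ∑ x, ‖v x‖ ^ 2 := by
  set w : ι → H := fun i => ∑ x, conj (β i x) • v x
  -- `w = A v` and `t = A* w` for `A v = (∑ x, conj (β i x) • v x)ᵢ`; `‖A v‖² ≤ ‖v‖ ‖A* A v‖`.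
  set t : X → H := fun x => ∑ i, β i x • w i
  set S := ∑ i, ‖w i‖ ^ 2
  set K := 1 + α * Fintype.card ι
  have hS_eq : S = (∑ x, ⟪v x, t x⟫_ℂ).re := by
    simp only [S, t, ← sum_inner_sum_conj_smul, Complex.re_sum, norm_sq_eq_re_inner (𝕜 := ℂ),
      RCLike.re_to_complex]
    rfl
  have hS_le : S ≤ ∑ x, ‖v x‖ * ‖t x‖ := by
    rw [hS_eq, Complex.re_sum]
    exact sum_le_sum fun x _ => (Complex.re_le_norm _).trans (norm_inner_le_norm _ _)
  have ht : ∑ x, ‖t x‖ ^ 2 ≤ K * S := by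
    rw [sum_norm_sq_sum_smul (fun x i => β i x) w]
    exact re_sum_mul_inner_le_of_norm_le hα hdiag hoff w
  have hS_sq : S ^ 2 ≤ (∑ x, ‖v x‖ ^ 2) * (K * S) := calc
    S ^ 2 ≤ (∑ x, ‖v x‖ * ‖t x‖) ^ 2 := pow_le_pow_left₀ (by positivity) hS_le 2
    _ ≤ (∑ x, ‖v x‖ ^ 2) * ∑ x, ‖t x‖ ^ 2 := sum_mul_sq_le_sq_mul_sq _ _ _
    _ ≤ (∑ x, ‖v x‖ ^ 2) * (K * S) := by gcongr
  rcases (show 0 ≤ S by positivity).eq_or_lt with hS0 | hS0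
  · rw [← hS0]; positivity
  · nlinarith

end WeightedSums

theorem card_mul_sub_logb_sum_le_sum_neg_logb {ι : Type*} [Fintype ι] [Nonempty ι] {b : ℝ}
    (hb : 1 < b) {M : ι → ℝ} (hM : ∀ i, 0 < M i) :
    (Fintype.card ι : ℝ) * (logb b (Fintype.card ι) - logb b (∑ i, M i)) ≤ ∑ i, -logb b (M i) := by
  set k : ℝ := (Fintype.card ι : ℝ)
  have hk : 0 < k := by positivity
  have hsum : 0 < ∑ i, M i := sum_pos (fun i _ => hM i) univ_nonempty
  have hJensen : ∑ i, k⁻¹ • log (M i) ≤ log (∑ i, k⁻¹ • M i) :=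
    strictConcaveOn_log_Ioi.concaveOn.le_map_sum (fun _ _ => by positivity)
      (by simp [k, card_univ]) (fun i _ => hM i)
  simp only [smul_eq_mul, ← mul_sum, log_mul (inv_ne_zero hk.ne') hsum.ne', log_inv] at hJensen
  simp only [logb, sum_neg_distrib, ← sum_div]
  rw [inv_mul_le_iff₀ hk] at hJensen
  rw [← sub_div, ← neg_div, mul_div_assoc', div_le_div_iff_of_pos_right (log_pos hb)]
  linarith

theorem ciSup_pos_of_sum_pos {ι : Type*} [Fintype ι] {f : ι → ℝ} (h : 0 < ∑ i, f i) :
    0 < ⨆ i, f i := by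
  obtain ⟨i, -, hi⟩ := exists_lt_of_sum_lt (s := univ) (f := 0) (g := f) (by simpa using h)
  exact hi.trans_le (le_ciSup (Finite.bddAbove_range f) i)

theorem negligible_of_abs_le_mul_pow {μ : ℕ → ℝ} {C r : ℝ} (hr0 : 0 ≤ r) (hr1 : r < 1)
    (hμ : ∀ n, |μ n| ≤ C * r ^ n) : Negligible μ := by
  intro c
  have htend : Tendsto (fun n : ℕ => C * ((n : ℝ) ^ c * r ^ n)) atTop (𝓝 0) := by
    simpa using (tendsto_pow_const_mul_const_pow_of_lt_one c hr0 hr1).const_mul C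
  obtain ⟨n₀, hn₀⟩ := eventually_atTop.mp
    ((htend.eventually (ge_mem_nhds one_pos)).and (eventually_ge_atTop 1))
  refine ⟨n₀, fun n hn => ?_⟩
  obtain ⟨hsmall, hn1⟩ := hn₀ n hn
  have hpow : 0 < (n : ℝ) ^ c := pow_pos (by exact_mod_cast hn1) c
  rw [le_div_iff₀ hpow]
  calc |μ n| * (n : ℝ) ^ c ≤ C * r ^ n * (n : ℝ) ^ c := by gcongr; exact hμ n
    _ = C * ((n : ℝ) ^ c * r ^ n) := by ring
    _ ≤ 1 := hsmall

theorem negligible_logb_one_add_mul_pow {b C r : ℝ} (hb : 1 < b) (hC : 0 ≤ C) (hr0 : 0 ≤ r)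
    (hr1 : r < 1) : Negligible fun n => logb b (1 + C * r ^ n) := by
  refine negligible_of_abs_le_mul_pow hr0 hr1 (C := C / log b) fun n => ?_
  have hx : 0 ≤ C * r ^ n := by positivity
  have hlog : log (1 + C * r ^ n) ≤ C * r ^ n := by
    linarith [log_le_sub_one_of_pos (show 0 < 1 + C * r ^ n by positivity)]
  rw [abs_of_nonneg (logb_nonneg hb (by linarith)), logb, div_mul_eq_mul_div]
  exact div_le_div_of_nonneg_right hlog (log_pos hb).le

theorem sqrt_inv_two_pow_mul_succ_le {ε : ℝ} {n N : ℕ} (hN : 0 < N)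
    (hNlt : (N : ℝ) < 2 ^ ((1 / 4 - ε) * n)) :
    √((2 ^ n)⁻¹) * (N + 1) ≤ 2 * ((2 : ℝ) ^ (-(1 / 4 + ε))) ^ n := by
  have hN1 : (1 : ℝ) ≤ N := by exact_mod_cast hN
  have hpow : √((2 ^ n)⁻¹) * (2 : ℝ) ^ ((1 / 4 - ε) * n) = ((2 : ℝ) ^ (-(1 / 4 + ε))) ^ n := by
    rw [← rpow_natCast (2 : ℝ) n, ← rpow_neg zero_le_two, sqrt_eq_rpow,
      ← rpow_mul zero_le_two, ← rpow_add two_pos, ← rpow_natCast, ← rpow_mul zero_le_two]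
    ring_nf
  calc √((2 ^ n)⁻¹) * (N + 1) ≤ √((2 ^ n)⁻¹) * (2 * (2 : ℝ) ^ ((1 / 4 - ε) * n)) := by
        gcongr; linarith
    _ = 2 * ((2 : ℝ) ^ (-(1 / 4 + ε))) ^ n := by rw [← hpow]; ring

/-- Corollary 2 of the paper: for `0 < N < 2^{(1/4−ε)n}` and distributions `Q⁰,…,Q^N`
obtained by measuring an `n`-qubit (purified) state in `N+1` mutually unbiased bases,
the min-entropies satisfy `∑ H^i_∞ ≥ (N+1)(log₂(N+1) − μ(n))` for a negligible `μ`.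

The state is purified with an ancilla of dimension `2^n`: `ψ = ∑ x, |x⟩ ⊗ v x` with
`∑ ‖v x‖² = 1`. The bases are given by their computational-basis coordinates `b i z x`,
each orthonormal, pairwise mutually unbiased, and `Qⁱ(z) = ‖∑ x, conj (b i z x) • v x‖²`,
with min-entropy `Hⁱ_∞ = −log₂ max_z Qⁱ(z)`. -/
theorem mub_minentropy_sum (ε : ℝ) (hε : 0 < ε) :
    ∃ μ : ℕ → ℝ, Negligible μ ∧
      ∀ (n N : ℕ), 0 < N → (N : ℝ) < (2 : ℝ) ^ ((1 / 4 - ε) * (n : ℝ)) →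
      ∀ (v : (Fin n → Bool) → EuclideanSpace ℂ (Fin n → Bool)),
        (∑ x : Fin n → Bool, ‖v x‖ ^ 2 = 1) →
      ∀ (b : Fin (N + 1) → (Fin n → Bool) → (Fin n → Bool) → ℂ),
        (∀ i z z', ∑ x : Fin n → Bool, starRingEnd ℂ (b i z x) * b i z' x =
          if z = z' then 1 else 0) →
        (∀ i j, i ≠ j → ∀ z w,
          ‖∑ x : Fin n → Bool, starRingEnd ℂ (b i z x) * b j w x‖ ^ 2 = ((2 : ℝ) ^ n)⁻¹) →
        ∑ i : Fin (N + 1),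
            (-(Real.logb 2 (⨆ z : Fin n → Bool,
                ‖∑ x : Fin n → Bool, (starRingEnd ℂ (b i z x)) • v x‖ ^ 2))) ≥
          ((N : ℝ) + 1) * (Real.logb 2 ((N : ℝ) + 1) - μ n) := by
  set r : ℝ := 2 ^ (-(1 / 4 + ε))
  have hr : r < 1 := rpow_lt_one_of_one_lt_of_neg one_lt_two (by linarith)
  refine ⟨fun n => logb 2 (1 + 2 * r ^ n),
    negligible_logb_one_add_mul_pow one_lt_two zero_le_two (by positivity) hr, ?_⟩
  intro n N hN hNlt v hv b horth hmub
  set Q : Fin (N + 1) → (Fin n → Bool) → ℝ := fun i z => ‖∑ x, conj (b i z x) • v x‖ ^ 2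
  choose z hz using fun i => exists_eq_ciSup_of_finite (f := Q i)
  have hQ_sum : ∀ i, ∑ z, Q i z = 1 := fun i =>
    (sum_norm_sq_sum_conj_smul_of_orthonormal (horth i) v).trans hv
  have hmax_pos : ∀ i, 0 < ⨆ z, Q i z := fun i =>
    ciSup_pos_of_sum_pos (by rw [hQ_sum]; exact one_pos)
  have hmax_sum : ∑ i, ⨆ z, Q i z ≤ 1 + 2 * r ^ n := calc
    ∑ i, ⨆ z, Q i z = ∑ i, ‖∑ x, conj (b i (z i) x) • v x‖ ^ 2 := by simp only [← hz, Q]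
    _ ≤ (1 + √((2 ^ n)⁻¹) * Fintype.card (Fin (N + 1))) * ∑ x, ‖v x‖ ^ 2 := by
        refine sum_norm_sq_sum_conj_smul_le (Real.sqrt_nonneg _) (fun i => ?_) (fun i j hij => ?_) v
        · simp [horth i (z i) (z i)]
        · exact ((sqrt_sq (norm_nonneg _)).symm.trans (congrArg sqrt (hmub i j hij _ _))).le
    _ = 1 + √((2 ^ n)⁻¹) * (N + 1) := by simp [hv]
    _ ≤ 1 + 2 * r ^ n := by linarith [sqrt_inv_two_pow_mul_succ_le hN hNlt]
  calc ∑ i, -logb 2 (⨆ z, Q i z)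
      ≥ (N + 1) * (logb 2 (N + 1) - logb 2 (∑ i, ⨆ z, Q i z)) := by
        simpa using card_mul_sub_logb_sum_le_sum_neg_logb one_lt_two hmax_pos
    _ ≥ (N + 1) * (logb 2 (N + 1) - logb 2 (1 + 2 * r ^ n)) := by
        gcongr
        exacts [one_lt_two, sum_pos (fun i _ => hmax_pos i) univ_nonempty]
end
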